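/- arXiv:1708.00433 — 2 statements merged into one kernel-verified Lean document; each statement's English description precedes it below -/
import Mathlib

section
/- Impossibility of biased coin flipping from scratch (combined bound): if for some ε ≥ 0 there exist systems satisfying the three security conditions d(Π_A Π_B, CF) ≤ ε, d(Π_B, σ_A CF^p_A) ≤ ε, and d(Π_A, CF^p_B σ_B) ≤ ε with respect to a pseudo-metric d that is non-increasing under composition with converters, then d(CF^p_B σ_B σ_A CF^p_A, CF) ≤ 3ε. Combined with the fact that any simulator strategy yields distinguishing advantage at least (1−p)/2 between CF^p_B σ CF^p_A and CF, this gives ε ≥ (1−p)/6. -/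
/-! Composing the two simulated halves `CF^p_B σ_B` and `σ_A CF^p_A` is `ε`-close to `Π_A Π_B`
factor by factor, since a distance that contracts under composition on either side makes
composition jointly 1-Lipschitz; with `d(Π_A Π_B, CF) ≤ ε` this gives `3ε`, and the lower
bound `(1 - p)/2` then forces `ε ≥ (1 - p)/6`. -/

theorem mul_mul_le_add {X : Type*} [Mul X] (d : X → X → ℝ)
    (htri : ∀ R S T : X, d R T ≤ d R S + d S T)
    (hleft : ∀ α R S : X, d (α * R) (α * S) ≤ d R S)
    (hright : ∀ α R S : X, d (R * α) (S * α) ≤ d R S) (R R' S S' : X) :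
    d (R * S) (R' * S') ≤ d R R' + d S S' :=
  calc d (R * S) (R' * S') ≤ d (R * S) (R' * S) + d (R' * S) (R' * S') := htri _ _ _
    _ ≤ d R R' + d S S' := add_le_add (hright _ _ _) (hleft _ _ _)

theorem coinflip_impossibility_general {X : Type*} [Monoid X]
    (d : X → X → ℝ)
    (hsymm : ∀ R S : X, d R S = d S R)
    (htri : ∀ R S T : X, d R T ≤ d R S + d S T)
    (hleft : ∀ α R S : X, d (α * R) (α * S) ≤ d R S)
    (hright : ∀ α R S : X, d (R * α) (S * α) ≤ d R S)
    (p ε : ℝ)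
    (CF CFpA CFpB PiA PiB σA σB : X)
    (h0 : d (PiA * PiB) CF ≤ ε)
    (hA : d PiB (σA * CFpA) ≤ ε)
    (hB : d PiA (CFpB * σB) ≤ ε)
    (hlb : ∀ τA τB : X, (1 - p) / 2 ≤ d (CFpB * τB * (τA * CFpA)) CF) :
    d (CFpB * σB * (σA * CFpA)) CF ≤ 3 * ε ∧ (1 - p) / 6 ≤ ε := by
  have hsim : d (CFpB * σB * (σA * CFpA)) CF ≤ 3 * ε :=
    calc d (CFpB * σB * (σA * CFpA)) CF
        ≤ d (CFpB * σB * (σA * CFpA)) (PiA * PiB) + d (PiA * PiB) CF := htri _ _ _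
      _ ≤ d (CFpB * σB) PiA + d (σA * CFpA) PiB + d (PiA * PiB) CF := by
          gcongr; exact mul_mul_le_add d htri hleft hright _ _ _ _
      _ ≤ 3 * ε := by rw [hsymm _ PiA, hsymm _ PiB]; linarith
  exact ⟨hsim, by linarith [hlb σA σB]⟩

/-- Impossibility of biased coin flipping from scratch (combined bound).
Resources and converters live in a common monoid `X` (composition written
multiplicatively); `d` is a pseudo-metric that is non-increasing under
composition with converters on either side. If the three security conditions
hold with error `ε`, then `d(CF^p_B σ_B σ_A CF^p_A, CF) ≤ 3ε`; combined with
the lower bound `(1-p)/2` on the distinguishing advantage of any simulated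
system from `CF`, this forces `ε ≥ (1-p)/6`. -/
theorem coinflip_impossibility {X : Type*} [Monoid X]
    (d : X → X → ℝ)
    (hrefl : ∀ R : X, d R R = 0)
    (hsymm : ∀ R S : X, d R S = d S R)
    (htri : ∀ R S T : X, d R T ≤ d R S + d S T)
    (hleft : ∀ α R S : X, d (α * R) (α * S) ≤ d R S)
    (hright : ∀ α R S : X, d (R * α) (S * α) ≤ d R S)
    (p ε : ℝ) (hp : p ∈ Set.Icc (0 : ℝ) 1) (hε : 0 ≤ ε)
    (CF CFpA CFpB PiA PiB σA σB : X)
    (h0 : d (PiA * PiB) CF ≤ ε)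
    (hA : d PiB (σA * CFpA) ≤ ε)
    (hB : d PiA (CFpB * σB) ≤ ε)
    (hlb : ∀ τA τB : X, (1 - p) / 2 ≤ d (CFpB * τB * (τA * CFpA)) CF) :
    d (CFpB * σB * (σA * CFpA)) CF ≤ 3 * ε ∧ (1 - p) / 6 ≤ ε :=
  coinflip_impossibility_general d hsymm htri hleft hright p ε CF CFpA CFpB PiA PiB σA σB h0 hA hB
    hlb
end

section
/- Construction of 1/2-biased coin flipping from unfair coin flipping (probabilistic core): let c' be a uniform bit held by the ideal 1/2-biased resource, and define the simulator output rule b' = c' if the adversary sends 'continue' and b' = 1 − c' if the adversary sends 'abort'; let the resource output c' with probability 1/2 and b' with probability 1/2. Then on 'continue' the honest output equals c' with probability 1, and on 'abort' the honest output is uniform and independent of c'. This matches exactly the real system in which an abort causes the honest party to output a fresh uniform bit, so the real and ideal output distributions are identical. -/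
/-- Probability that in the *real* system (honest party outputs the shared
uniform bit `c` on 'continue' and a fresh uniform bit `cu` on 'abort', where
the abort decision `f c` depends on the adversary's view `c`) the adversary's
view is `v` and the honest output is `o`. -/
noncomputable def realJoint (f : Bool → Bool) (v o : Bool) : ℝ :=
  ∑ c : Bool, ∑ cu : Bool,
    (1 / 4) * (if c = v then 1 else 0) *
      (if (if f c then cu else c) = o then 1 else 0)

/-- Probability that in the *ideal* system (1/2-biased coin flip with the
simulator rule `b' = c'` on 'continue' and `b' = ¬c'` on 'abort'; the resource
outputs `b'` if the biasing coin `k` comes up and `c'` otherwise, each with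
probability 1/2) the adversary's view is `v` and the honest output is `o`. -/
noncomputable def idealJoint (f : Bool → Bool) (v o : Bool) : ℝ :=
  ∑ c' : Bool, ∑ k : Bool,
    (1 / 4) * (if c' = v then 1 else 0) *
      (if (if k then (if f c' then !c' else c') else c') = o then 1 else 0)

/-! On 'continue' both systems output the adversary's view `v`. On 'abort' the real system outputs
a fresh uniform bit, and the ideal one outputs `xor k v` for the uniform biasing coin `k`, which is
again uniform because `k ↦ xor k v` is a bijection. So in both systems the view is uniform and the
output given the view has the law `honestOutputLaw (f v) v`. -/

theorem sum_indicator_comp_bijective {α : Type*} [Fintype α] [DecidableEq α] {g : α → α}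
    (hg : g.Bijective) (o : α) : ∑ k, (if g k = o then (1 : ℝ) else 0) = 1 :=
  (Equiv.sum_comp (Equiv.ofBijective g hg) (fun x => if x = o then (1 : ℝ) else 0)).trans
    (Fintype.sum_ite_eq' o _)

theorem xor_left_bijective (v : Bool) : (fun k => xor k v).Bijective :=
  Function.Involutive.bijective fun k => by cases k <;> cases v <;> rfl

theorem biased_output_eq (a c k : Bool) :
    (if k then (if a then !c else c) else c) = if a then xor k c else c := by
  cases a <;> cases c <;> cases k <;> rfl

noncomputable def honestOutputLaw (abort v o : Bool) : ℝ :=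
  if abort then 1 / 2 else if v = o then 1 else 0

theorem sum_half_indicator_eq_honestOutputLaw {g : Bool → Bool} (hg : g.Bijective)
    (abort v o : Bool) :
    ∑ k : Bool, (1 / 2 : ℝ) * (if (if abort then g k else v) = o then 1 else 0)
      = honestOutputLaw abort v o := by
  cases abort
  · simp [honestOutputLaw]
  · rw [honestOutputLaw, if_pos rfl, ← Finset.mul_sum]
    simp only [if_true, sum_indicator_comp_bijective hg o, mul_one]

theorem sum_view_indicator (F : Bool → Bool → ℝ) (v : Bool) :
    ∑ c : Bool, ∑ k : Bool, (1 / 4 : ℝ) * (if c = v then 1 else 0) * F c k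
      = 1 / 2 * ∑ k : Bool, 1 / 2 * F v k := by
  cases v <;> simp <;> ring

theorem realJoint_eq (f : Bool → Bool) (v o : Bool) :
    realJoint f v o = 1 / 2 * honestOutputLaw (f v) v o := by
  rw [realJoint, sum_view_indicator]
  exact congrArg _ (sum_half_indicator_eq_honestOutputLaw Function.bijective_id _ _ _)

theorem idealJoint_eq (f : Bool → Bool) (v o : Bool) :
    idealJoint f v o = 1 / 2 * honestOutputLaw (f v) v o := by
  simp only [idealJoint, biased_output_eq]
  rw [sum_view_indicator, sum_half_indicator_eq_honestOutputLaw (xor_left_bijective v)]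

/-- The simulator for constructing a 1/2-biased coin flip from an unfair coin
flip is perfect: on 'continue' the ideal honest output equals `c'` with
probability 1; on 'abort' it is uniform (and independent of `c'`); and for
every abort/continue decision rule `f` the joint distribution of (adversary's
view, honest output) is identical in the real and ideal systems. -/
theorem unfair_to_biased_simulation :
    (∀ (f : Bool → Bool) (c' : Bool), f c' = false →
      (∑ k : Bool, (1 / 2 : ℝ) *
        (if (if k then (if f c' then !c' else c') else c') = c' then 1 else 0))
        = 1) ∧
    (∀ (f : Bool → Bool) (c' : Bool), f c' = true → ∀ o : Bool,
      (∑ k : Bool, (1 / 2 : ℝ) *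
        (if (if k then (if f c' then !c' else c') else c') = o then 1 else 0))
        = 1 / 2) ∧
    (∀ (f : Bool → Bool) (v o : Bool), realJoint f v o = idealJoint f v o) := by
  refine ⟨fun f c' hcont => ?_, fun f c' habort o => ?_, fun f v o => ?_⟩
  · simp only [biased_output_eq]
    rw [sum_half_indicator_eq_honestOutputLaw (xor_left_bijective c'), hcont]
    simp [honestOutputLaw]
  · simp only [biased_output_eq]
    rw [sum_half_indicator_eq_honestOutputLaw (xor_left_bijective c'), habort, honestOutputLaw,
      if_pos rfl]
  · rw [realJoint_eq, idealJoint_eq]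
end
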